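/- Let d ≥ 2, let H be a d×d Hermitian complex matrix, β > 0, and ρ_β the Gibbs state of H. Let B̃ be a Hermitian matrix with B̃ρ_β = ρ_βB̃, and let L_KMS be a linear map on d×d complex matrices whose Hilbert–Schmidt adjoint L_KMS† is self-adjoint with respect to the KMS inner product. Set L̃(X) := −i(B̃X − XB̃) + L_KMS(X), let K(X) := ρ_β^{−1/4}·L̃(ρ_β^{1/4} X ρ_β^{1/4})·ρ_β^{−1/4}, and let ℋ := (1/2)(K + K†) where K† is the Hilbert–Schmidt adjoint of K. Then the two infima coincide: inf{ −Re⟨A, L_KMS†(A)⟩_{ρ_β} / ⟨A,A⟩_{ρ_β} : A ≠ 0, Tr(Aρ_β) = 0 } = inf{ −Re⟨X, ℋ(X)⟩₂ / ⟨X,X⟩₂ : X ≠ 0, ⟨X, ρ_β^{1/2}⟩₂ = 0 }. -/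

import Mathlib

open Matrix MeasureTheory Filter
open scoped ComplexOrder

noncomputable section

/-- The space of `d × d` complex matrices. -/
abbrev Mat (d : ℕ) : Type := Matrix (Fin d) (Fin d) ℂ

/-- The Gibbs state `ρ_β = exp(-βH)/Tr(exp(-βH))`. -/
def gibbs {d : ℕ} (H : Mat d) (β : ℝ) : Mat d :=
  (Matrix.trace (NormedSpace.exp ((-β : ℂ) • H)))⁻¹ • NormedSpace.exp ((-β : ℂ) • H)

/-- The power `ρ_β^s = exp(-sβH)/Tr(exp(-βH))^s`. -/
def gibbsPow {d : ℕ} (H : Mat d) (β s : ℝ) : Mat d :=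
  ((Matrix.trace (NormedSpace.exp ((-β : ℂ) • H))) ^ (s : ℂ))⁻¹ •
    NormedSpace.exp ((-(s * β) : ℂ) • H)

/-- The Hilbert–Schmidt inner product `⟨A,B⟩₂ = Tr(A† B)`. -/
def hsInner {d : ℕ} (A B : Mat d) : ℂ := Matrix.trace (Aᴴ * B)

/-- The KMS inner product `⟨A,B⟩_{ρ_β} = Tr(A† ρ_β^{1/2} B ρ_β^{1/2})`. -/
def kmsInner {d : ℕ} (H : Mat d) (β : ℝ) (A B : Mat d) : ℂ :=
  Matrix.trace (Aᴴ * gibbsPow H β (1/2) * B * gibbsPow H β (1/2))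

/-- The trace norm `‖A‖₁ = Tr √(A†A)`. -/
def traceNorm {d : ℕ} (A : Mat d) : ℝ :=
  (((Matrix.posSemidef_conjTranspose_mul_self A).1.eigenvectorUnitary.1 *
    Matrix.diagonal (((↑) : ℝ → ℂ) ∘ (Real.sqrt ·) ∘ (Matrix.posSemidef_conjTranspose_mul_self A).1.eigenvalues) *
    (star (Matrix.posSemidef_conjTranspose_mul_self A).1.eigenvectorUnitary : Mat d)).trace).re

/-- The operator (spectral) norm of a matrix. -/
def opNorm {d : ℕ} (A : Mat d) : ℝ :=
  ‖Matrix.toEuclideanCLM (𝕜 := ℂ) A‖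

/-- The Frobenius / Hilbert–Schmidt norm `‖A‖₂ = √Tr(A†A)`. -/
def frobNorm {d : ℕ} (A : Mat d) : ℝ :=
  Real.sqrt ((Matrix.trace (Aᴴ * A)).re)

attribute [local instance] Matrix.frobeniusNormedAddCommGroup Matrix.frobeniusNormedSpace

/-- The exponential of a linear endomorphism of matrix space. -/
def endExp {d : ℕ} (L : Mat d →ₗ[ℂ] Mat d) : Mat d →ₗ[ℂ] Mat d :=
  (@NormedSpace.exp (Mat d →L[ℂ] Mat d) _ _
    (@NonUnitalSeminormedRing.toIsTopologicalRing _ ContinuousLinearMap.toNormedRing.toNonUnitalNormedRing.toNonUnitalSeminormedRing)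
    (LinearMap.toContinuousLinearMap L)).toLinearMap

/-- The induced trace norm (1→1 norm) of a linear map on matrices. -/
def oneNorm {d : ℕ} (L : Mat d →ₗ[ℂ] Mat d) : ℝ :=
  ⨆ A : {A : Mat d // traceNorm A = 1}, traceNorm (L A.1)

/-!
The congruence `Φ(A) = ρ_β^{1/4} A ρ_β^{1/4}` is a linear bijection with
`⟨Φ A, Φ B⟩₂ = ⟨A, B⟩_{ρ_β}` and `⟨Φ A, ρ_β^{1/2}⟩₂ = conj Tr(A ρ_β)`, so the two sets of
Rayleigh quotients coincide as soon as `Re⟨Φ A, ℋ (Φ A)⟩₂ = Re⟨A, L_KMS†(A)⟩_{ρ_β}`. Since `ℋ`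
is the Hermitian part of `K`, the left side is
`Re⟨Φ A, K (Φ A)⟩₂ = Re Tr(A† L̃(ρ_β^{1/2} A ρ_β^{1/2}))`. The Hamiltonian part `-i[B̃, ·]`
contributes a purely imaginary number because `B̃` is Hermitian and commutes with `ρ_β^{1/2}`,
and the dissipative part gives `conj ⟨A, L_KMS†(A)⟩_{ρ_β}` by Hilbert–Schmidt adjointness. The
powers of `ρ_β` are handled through the spectral decomposition of `H`.
-/

namespace Matrix

variable {n R : Type*} [Fintype n] [DecidableEq n]

theorem commute_diagonal_of_commute_diagonal [CommRing R] [NoZeroDivisors R]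
    {M : Matrix n n R} {f g : n → R} (h : Commute M (diagonal f))
    (hfg : ∀ i j, f i = f j → g i = g j) : Commute M (diagonal g) := by
  ext i j
  have hij : M i j * f j = f i * M i j := by simpa using congr_fun₂ h i j
  by_cases hM : M i j = 0
  · simp [hM]
  · have : f i = f j := (mul_left_cancel₀ hM (hij.trans (mul_comm _ _))).symm
    simp [hfg i j this, mul_comm]

theorem IsHermitian.exp_smul {H : Matrix n n ℂ} (hH : H.IsHermitian) (c : ℂ) :
    NormedSpace.exp (c • H) = Unitary.conjStarAlgAut ℂ _ hH.eigenvectorUnitary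
      (diagonal fun i => Complex.exp (c * hH.eigenvalues i)) := by
  set U := hH.eigenvectorUnitary
  have hU : IsUnit (U : Matrix n n ℂ) := ⟨Unitary.toUnits U, rfl⟩
  have hinv : (U : Matrix n n ℂ)⁻¹ = star (U : Matrix n n ℂ) :=
    inv_eq_left_inv (Unitary.coe_star_mul_self U)
  have hdiag : c • diagonal (RCLike.ofReal ∘ hH.eigenvalues) =
      diagonal fun i => c * (hH.eigenvalues i : ℂ) := by
    ext i j; by_cases h : i = j <;> simp [h]
  conv_lhs => rw [hH.spectral_theorem, ← map_smul, hdiag]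
  rw [Unitary.conjStarAlgAut_apply, Unitary.conjStarAlgAut_apply, ← hinv, exp_conj _ _ hU,
    exp_diagonal, Pi.exp_def, ← Complex.exp_eq_exp_ℂ]

end Matrix

namespace Matrix.IsHermitian

variable {n : Type*} [Fintype n] [DecidableEq n] {H : Matrix n n ℂ} (hH : H.IsHermitian)

theorem trace_exp_smul (c : ℂ) :
    trace (NormedSpace.exp (c • H)) = ∑ i, Complex.exp (c * hH.eigenvalues i) := by
  rw [hH.exp_smul, Unitary.conjStarAlgAut_apply, trace_mul_cycle, Unitary.coe_star_mul_self,
    one_mul, trace_diagonal]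

def gibbsWeight (β s : ℝ) (i : n) : ℝ :=
  Real.exp (-(s * β) * hH.eigenvalues i) / (∑ j, Real.exp (-β * hH.eigenvalues j)) ^ s

variable (β : ℝ)

theorem sum_exp_neg_mul_eigenvalues_pos (i : n) : 0 < ∑ j, Real.exp (-β * hH.eigenvalues j) :=
  Finset.sum_pos (fun _ _ => Real.exp_pos _) ⟨i, Finset.mem_univ i⟩

theorem gibbsWeight_add (s t : ℝ) (i : n) :
    hH.gibbsWeight β (s + t) i = hH.gibbsWeight β s i * hH.gibbsWeight β t i := by
  rw [gibbsWeight, gibbsWeight, gibbsWeight, div_mul_div_comm, ← Real.exp_add,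
    ← Real.rpow_add (hH.sum_exp_neg_mul_eigenvalues_pos β i)]
  ring_nf

theorem gibbsWeight_zero (i : n) : hH.gibbsWeight β 0 i = 1 := by
  simp [gibbsWeight]

theorem gibbsWeight_eq_rpow (s : ℝ) (i : n) :
    hH.gibbsWeight β s i = hH.gibbsWeight β 1 i ^ s := by
  rw [gibbsWeight, gibbsWeight, Real.rpow_one, Real.div_rpow (Real.exp_pos _).le
    (hH.sum_exp_neg_mul_eigenvalues_pos β i).le, ← Real.exp_mul]
  ring_nf

end Matrix.IsHermitian

section HilbertSchmidt

variable {d : ℕ}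

theorem hsInner_add_right (A X Y : Mat d) : hsInner A (X + Y) = hsInner A X + hsInner A Y := by
  rw [hsInner, hsInner, hsInner, Matrix.mul_add, trace_add]

theorem hsInner_smul_right (A X : Mat d) (c : ℂ) : hsInner A (c • X) = c * hsInner A X := by
  rw [hsInner, hsInner, Matrix.mul_smul, trace_smul, smul_eq_mul]

theorem star_hsInner (A B : Mat d) : star (hsInner A B) = hsInner B A := by
  rw [hsInner, hsInner, ← trace_conjTranspose, conjTranspose_mul, conjTranspose_conjTranspose]

end HilbertSchmidt

section GibbsPow

variable {d : ℕ} {H : Mat d} {β : ℝ}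

theorem gibbsPow_eq_conj_diagonal (hH : H.IsHermitian) (s : ℝ) :
    gibbsPow H β s = Unitary.conjStarAlgAut ℂ _ hH.eigenvectorUnitary
      (diagonal fun i => (hH.gibbsWeight β s i : ℂ)) := by
  have hZ : trace (NormedSpace.exp ((-β : ℂ) • H)) =
      ((∑ j, Real.exp (-β * hH.eigenvalues j) : ℝ) : ℂ) := by
    rw [hH.trace_exp_smul]
    push_cast
    rfl
  rw [gibbsPow, hZ, hH.exp_smul, ← map_smul]
  congr 1
  ext i j
  by_cases h : i = j
  · subst h
    rw [Matrix.smul_apply, diagonal_apply_eq, diagonal_apply_eq, smul_eq_mul,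
      Matrix.IsHermitian.gibbsWeight, Complex.ofReal_div, Complex.ofReal_cpow (by positivity)]
    push_cast
    ring
  · simp [h]

theorem gibbsPow_add (hH : H.IsHermitian) (s t : ℝ) :
    gibbsPow H β s * gibbsPow H β t = gibbsPow H β (s + t) := by
  simp only [gibbsPow_eq_conj_diagonal hH, ← map_mul, diagonal_mul_diagonal, hH.gibbsWeight_add,
    Complex.ofReal_mul]

theorem gibbsPow_zero (hH : H.IsHermitian) : gibbsPow H β 0 = 1 := by
  simp [gibbsPow_eq_conj_diagonal hH, hH.gibbsWeight_zero]

theorem isHermitian_gibbsPow (hH : H.IsHermitian) (s : ℝ) : (gibbsPow H β s).IsHermitian := by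
  rw [gibbsPow_eq_conj_diagonal hH]
  refine IsSelfAdjoint.map ?_ _
  exact isHermitian_diagonal_of_self_adjoint _ (by ext; simp)

theorem gibbsPow_mul_gibbsPow_mul (hH : H.IsHermitian) (s t : ℝ) (X : Mat d) :
    gibbsPow H β s * (gibbsPow H β t * X) = gibbsPow H β (s + t) * X := by
  rw [← mul_assoc, gibbsPow_add hH]

theorem gibbs_eq_gibbsPow_one : gibbs H β = gibbsPow H β 1 := by
  simp [gibbs, gibbsPow]

/-- The eigenvalues of `ρ_β^s` are the `s`-th powers of those of `ρ_β`, so a matrix that keeps the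
eigenspaces of `ρ_β` keeps those of `ρ_β^s`. -/
theorem Commute.gibbsPow_of_gibbs (hH : H.IsHermitian) {B : Mat d} (h : Commute B (gibbs H β))
    (s : ℝ) :
    Commute B (gibbsPow H β s) := by
  rw [gibbs_eq_gibbsPow_one, gibbsPow_eq_conj_diagonal hH] at h
  rw [gibbsPow_eq_conj_diagonal hH]
  set U := Unitary.conjStarAlgAut ℂ (Mat d) hH.eigenvectorUnitary
  have hdiag := h.map U.symm
  rw [U.symm_apply_apply] at hdiag
  rw [← U.apply_symm_apply B]
  refine (commute_diagonal_of_commute_diagonal hdiag fun i j hij => ?_).map U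
  rw [hH.gibbsWeight_eq_rpow β s i, hH.gibbsWeight_eq_rpow β s j, Complex.ofReal_injective hij]

end GibbsPow

section Sandwich

variable {d : ℕ} {H : Mat d}

def kmsSandwich (hH : H.IsHermitian) (β : ℝ) : Mat d ≃ₗ[ℂ] Mat d where
  toFun A := gibbsPow H β (1/4) * A * gibbsPow H β (1/4)
  invFun X := gibbsPow H β (-(1/4)) * X * gibbsPow H β (-(1/4))
  map_add' A B := by simp only [mul_add, add_mul]
  map_smul' c A := by simp only [Matrix.mul_smul, Matrix.smul_mul, RingHom.id_apply]
  left_inv A := by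
    simp only [← mul_assoc, gibbsPow_add hH]
    simp only [mul_assoc, gibbsPow_add hH]
    norm_num [gibbsPow_zero hH]
  right_inv X := by
    simp only [← mul_assoc, gibbsPow_add hH]
    simp only [mul_assoc, gibbsPow_add hH]
    norm_num [gibbsPow_zero hH]

variable {β : ℝ}

theorem kmsSandwich_apply (hH : H.IsHermitian) (A : Mat d) :
    kmsSandwich hH β A = gibbsPow H β (1/4) * A * gibbsPow H β (1/4) := rfl

theorem kmsInner_eq_hsInner_kmsSandwich (hH : H.IsHermitian) (A B : Mat d) :
    kmsInner H β A B = hsInner (kmsSandwich hH β A) (kmsSandwich hH β B) := by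
  rw [kmsInner, hsInner, kmsSandwich_apply, kmsSandwich_apply]
  simp only [conjTranspose_mul, (isHermitian_gibbsPow hH _).eq, mul_assoc,
    gibbsPow_mul_gibbsPow_mul hH]
  rw [trace_mul_comm (gibbsPow H β (1/4))]
  simp only [mul_assoc, gibbsPow_add hH]
  norm_num

theorem hsInner_kmsSandwich_gibbsPow_half (hH : H.IsHermitian) (A : Mat d) :
    hsInner (kmsSandwich hH β A) (gibbsPow H β (1/2)) = star (trace (A * gibbs H β)) := by
  rw [hsInner, kmsSandwich_apply, ← trace_conjTranspose, gibbs_eq_gibbsPow_one]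
  simp only [conjTranspose_mul, (isHermitian_gibbsPow hH _).eq, mul_assoc, gibbsPow_add hH]
  rw [trace_mul_comm (gibbsPow H β (1/4)), trace_mul_comm (gibbsPow H β 1)]
  simp only [mul_assoc, gibbsPow_add hH]
  norm_num

theorem kmsInner_eq_hsInner_gibbsPow_half_mul (hH : H.IsHermitian) (A B : Mat d) :
    kmsInner H β A B = hsInner (gibbsPow H β (1/2) * A * gibbsPow H β (1/2)) B := by
  rw [kmsInner, hsInner, conjTranspose_mul, conjTranspose_mul, (isHermitian_gibbsPow hH _).eq,
    trace_mul_comm, ← mul_assoc, ← mul_assoc]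

theorem hsInner_kmsSandwich_similarity_apply (hH : H.IsHermitian) {K L : Mat d → Mat d}
    (hK : ∀ X, K X = gibbsPow H β (-(1/4)) *
      L (gibbsPow H β (1/4) * X * gibbsPow H β (1/4)) * gibbsPow H β (-(1/4))) (A : Mat d) :
    hsInner (kmsSandwich hH β A) (K (kmsSandwich hH β A)) =
      hsInner A (L (gibbsPow H β (1/2) * A * gibbsPow H β (1/2))) := by
  have hsandwich : gibbsPow H β (1/4) * kmsSandwich hH β A * gibbsPow H β (1/4) =
      gibbsPow H β (1/2) * A * gibbsPow H β (1/2) := by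
    simp only [kmsSandwich_apply, mul_assoc, gibbsPow_mul_gibbsPow_mul hH, gibbsPow_add hH]
    norm_num
  rw [hK, hsandwich, hsInner, hsInner, kmsSandwich_apply]
  simp only [conjTranspose_mul, (isHermitian_gibbsPow hH _).eq, mul_assoc,
    gibbsPow_mul_gibbsPow_mul hH]
  rw [trace_mul_comm (gibbsPow H β (1/4))]
  simp only [mul_assoc, gibbsPow_add hH]
  norm_num [gibbsPow_zero hH]

theorem hsInner_apply_sandwich_eq_star_kmsInner (hH : H.IsHermitian) {L Ladj : Mat d → Mat d}
    (hadj : ∀ A B, hsInner (L A) B = hsInner A (Ladj B)) (A : Mat d) :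
    hsInner A (L (gibbsPow H β (1/2) * A * gibbsPow H β (1/2))) =
      star (kmsInner H β A (Ladj A)) := by
  rw [kmsInner_eq_hsInner_gibbsPow_half_mul hH, ← hadj, star_hsInner]

end Sandwich

section Generator

variable {d : ℕ}

theorem re_hsInner_half_smul_add_adjoint {K Kadj : Mat d →ₗ[ℂ] Mat d}
    (hKadj : ∀ A B, hsInner (K A) B = hsInner A (Kadj B)) (X : Mat d) :
    (hsInner X (((1/2 : ℂ) • (K + Kadj)) X)).re = (hsInner X (K X)).re := by
  have hadjX : hsInner X (Kadj X) = star (hsInner X (K X)) := by rw [← hKadj, star_hsInner]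
  rw [LinearMap.smul_apply, LinearMap.add_apply, hsInner_smul_right, hsInner_add_right, hadjX,
    Complex.star_def, Complex.add_conj]
  simp

theorem star_hsInner_commutator_sandwich {B S : Mat d} (hB : B.IsHermitian) (hS : S.IsHermitian)
    (hBS : Commute B S) (A : Mat d) :
    star (hsInner A (B * (S * A * S) - S * A * S * B)) =
      hsInner A (B * (S * A * S) - S * A * S * B) := by
  have hSB : ∀ X, S * (B * X) = B * (S * X) := fun X => by rw [← mul_assoc, ← hBS.eq, mul_assoc]
  rw [hsInner, ← trace_conjTranspose, Matrix.mul_sub]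
  simp only [conjTranspose_sub, conjTranspose_mul, conjTranspose_conjTranspose, hB.eq, hS.eq,
    mul_assoc]
  rw [trace_sub, trace_sub, trace_mul_comm S, trace_mul_comm B]
  simp only [mul_assoc]
  rw [trace_mul_comm S]
  simp only [mul_assoc, hSB, hBS.eq]

theorem re_hsInner_of_eq_neg_I_smul_commutator_add {B S : Mat d} (hB : B.IsHermitian)
    (hS : S.IsHermitian) (hBS : Commute B S) {Lt L : Mat d → Mat d}
    (hLt : ∀ X, Lt X = -(Complex.I • (B * X - X * B)) + L X) (A : Mat d) :
    (hsInner A (Lt (S * A * S))).re = (hsInner A (L (S * A * S))).re := by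
  have hreal := star_hsInner_commutator_sandwich hB hS hBS A
  rw [Complex.star_def, Complex.conj_eq_iff_im] at hreal
  rw [hLt, hsInner_add_right, hsInner, Matrix.mul_neg, trace_neg, Matrix.mul_smul, trace_smul,
    smul_eq_mul, ← hsInner]
  simp [hreal]

end Generator

theorem re_hsInner_hermitianPart_kmsSandwich {d : ℕ} {H : Mat d} (hH : H.IsHermitian) {β : ℝ}
    {B : Mat d} (hB : B.IsHermitian) (hBρ : Commute B (gibbs H β))
    {L Ladj Lt K Kadj : Mat d →ₗ[ℂ] Mat d} (hadj : ∀ A B, hsInner (L A) B = hsInner A (Ladj B))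
    (hLt : ∀ X, Lt X = -(Complex.I • (B * X - X * B)) + L X)
    (hK : ∀ X, K X = gibbsPow H β (-(1/4)) *
      Lt (gibbsPow H β (1/4) * X * gibbsPow H β (1/4)) * gibbsPow H β (-(1/4)))
    (hKadj : ∀ A B, hsInner (K A) B = hsInner A (Kadj B)) (A : Mat d) :
    (hsInner (kmsSandwich hH β A) (((1/2 : ℂ) • (K + Kadj)) (kmsSandwich hH β A))).re =
      (kmsInner H β A (Ladj A)).re := by
  rw [re_hsInner_half_smul_add_adjoint hKadj, hsInner_kmsSandwich_similarity_apply hH hK,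
    re_hsInner_of_eq_neg_I_smul_commutator_add hB (isHermitian_gibbsPow hH _)
      (hBρ.gibbsPow_of_gibbs hH _) hLt,
    hsInner_apply_sandwich_eq_star_kmsInner hH hadj, Complex.star_def, Complex.conj_re]

theorem stmt_18_general {d : ℕ} (H : Mat d) (hH : H.IsHermitian) (β : ℝ)
    (Bt : Mat d) (hBt : Bt.IsHermitian)
    (hBtcomm : Bt * gibbs H β = gibbs H β * Bt)
    (LKMS LKMSadj : Mat d →ₗ[ℂ] Mat d)
    (hadj : ∀ A B : Mat d, hsInner (LKMS A) B = hsInner A (LKMSadj B))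
    (Lt : Mat d →ₗ[ℂ] Mat d)
    (hLt : ∀ X : Mat d, Lt X = -(Complex.I • (Bt * X - X * Bt)) + LKMS X)
    (K Kadj : Mat d →ₗ[ℂ] Mat d)
    (hK : ∀ X : Mat d, K X = gibbsPow H β (-(1/4)) *
      Lt (gibbsPow H β (1/4) * X * gibbsPow H β (1/4)) * gibbsPow H β (-(1/4)))
    (hKadj : ∀ A B : Mat d, hsInner (K A) B = hsInner A (Kadj B)) :
    sInf {x : ℝ | ∃ A : Mat d, A ≠ 0 ∧ Matrix.trace (A * gibbs H β) = 0 ∧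
        x = (-(kmsInner H β A (LKMSadj A))).re / (kmsInner H β A A).re} =
      sInf {x : ℝ | ∃ X : Mat d, X ≠ 0 ∧ hsInner X (gibbsPow H β (1/2)) = 0 ∧
        x = (-(hsInner X (((1/2 : ℂ) • (K + Kadj)) X))).re / (hsInner X X).re} := by
  congr 1
  ext x
  refine (kmsSandwich hH β).toEquiv.exists_congr fun A => ?_
  rw [LinearEquiv.coe_toEquiv, (kmsSandwich hH β).map_ne_zero_iff,
    hsInner_kmsSandwich_gibbsPow_half, star_eq_zero, ← kmsInner_eq_hsInner_kmsSandwich,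
    Complex.neg_re, Complex.neg_re,
    re_hsInner_hermitianPart_kmsSandwich hH hBt hBtcomm hadj hLt hK hKadj]

/-- the KMS spectral gap of `L_KMS` equals the spectral gap of the Hermitian
part of the similarity-transformed full generator `L̃`. -/
theorem stmt_18 {d : ℕ} (hd : 2 ≤ d) (H : Mat d) (hH : H.IsHermitian) (β : ℝ) (hβ : 0 < β)
    (Bt : Mat d) (hBt : Bt.IsHermitian)
    (hBtcomm : Bt * gibbs H β = gibbs H β * Bt)
    (LKMS LKMSadj : Mat d →ₗ[ℂ] Mat d)
    (hadj : ∀ A B : Mat d, hsInner (LKMS A) B = hsInner A (LKMSadj B))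
    (hKMS : ∀ A B : Mat d, kmsInner H β A (LKMSadj B) = kmsInner H β (LKMSadj A) B)
    (Lt : Mat d →ₗ[ℂ] Mat d)
    (hLt : ∀ X : Mat d, Lt X = -(Complex.I • (Bt * X - X * Bt)) + LKMS X)
    (K Kadj : Mat d →ₗ[ℂ] Mat d)
    (hK : ∀ X : Mat d, K X = gibbsPow H β (-(1/4)) *
      Lt (gibbsPow H β (1/4) * X * gibbsPow H β (1/4)) * gibbsPow H β (-(1/4)))
    (hKadj : ∀ A B : Mat d, hsInner (K A) B = hsInner A (Kadj B)) :
    sInf {x : ℝ | ∃ A : Mat d, A ≠ 0 ∧ Matrix.trace (A * gibbs H β) = 0 ∧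
        x = (-(kmsInner H β A (LKMSadj A))).re / (kmsInner H β A A).re} =
      sInf {x : ℝ | ∃ X : Mat d, X ≠ 0 ∧ hsInner X (gibbsPow H β (1/2)) = 0 ∧
        x = (-(hsInner X (((1/2 : ℂ) • (K + Kadj)) X))).re / (hsInner X X).re} :=
  stmt_18_general H hH β Bt hBt hBtcomm LKMS LKMSadj hadj Lt hLt K Kadj hK hKadj

end
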